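/- The abelianization of the discrete oscillator group L = H₁ʳ(ℤ) ⋊_S ℤδ with S(α) = α⁻¹γ, S(β) = β⁻¹γ⁻¹ (type L²⁺_r, r even) is isomorphic to ℤ₂ × ℤ_{2r} × ℤ, while the abelianization of L with S(α) = α⁻¹, S(β) = β⁻¹ (type L²_r, r even) is isomorphic to ℤ₂ × ℤ₂ × ℤ_r × ℤ. In particular, for even r these two groups are not isomorphic. -/

import Mathlib

/-- The discrete Heisenberg group `H₁ʳ(ℤ)`: elements `α^x β^y γ^z` in normal form,
with `[α,β] = γ^r` and `γ` central. -/
@[ext]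
structure Heis (r : ℤ) where
  x : ℤ
  y : ℤ
  z : ℤ

namespace Heis

variable {r : ℤ}

instance : Mul (Heis r) :=
  ⟨fun a b => ⟨a.x + b.x, a.y + b.y, a.z + b.z + r * a.x * b.y⟩⟩

instance : One (Heis r) := ⟨⟨0, 0, 0⟩⟩

instance : Inv (Heis r) := ⟨fun a => ⟨-a.x, -a.y, -a.z + r * a.x * a.y⟩⟩

@[simp] theorem mul_x (a b : Heis r) : (a * b).x = a.x + b.x := rfl
@[simp] theorem mul_y (a b : Heis r) : (a * b).y = a.y + b.y := rfl
@[simp] theorem mul_z (a b : Heis r) : (a * b).z = a.z + b.z + r * a.x * b.y := rfl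
@[simp] theorem one_x : (1 : Heis r).x = 0 := rfl
@[simp] theorem one_y : (1 : Heis r).y = 0 := rfl
@[simp] theorem one_z : (1 : Heis r).z = 0 := rfl
@[simp] theorem inv_x (a : Heis r) : (a⁻¹).x = -a.x := rfl
@[simp] theorem inv_y (a : Heis r) : (a⁻¹).y = -a.y := rfl
@[simp] theorem inv_z (a : Heis r) : (a⁻¹).z = -a.z + r * a.x * a.y := rfl

instance : Group (Heis r) where
  mul_assoc a b c := by ext <;> simp <;> ring
  one_mul a := by ext <;> simp
  mul_one a := by ext <;> simp
  inv_mul_cancel a := by ext <;> simp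

/-- The generator `α` of the discrete Heisenberg group. -/
def α : Heis r := ⟨1, 0, 0⟩
/-- The generator `β` of the discrete Heisenberg group. -/
def β : Heis r := ⟨0, 1, 0⟩
/-- The central generator `γ` of the discrete Heisenberg group. -/
def γ : Heis r := ⟨0, 0, 1⟩

-- new material
theorem alpha_zpow (n : ℤ) : (α : Heis r) ^ n = ⟨n, 0, 0⟩ := by
  induction n using Int.induction_on with
  | zero => rfl
  | succ k ih => rw [zpow_add_one, ih]; ext <;> simp [α] <;> push_cast <;> ring
  | pred k ih => rw [zpow_sub_one, ih]; ext <;> simp [α] <;> push_cast <;> ring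

theorem beta_zpow (n : ℤ) : (β : Heis r) ^ n = ⟨0, n, 0⟩ := by
  induction n using Int.induction_on with
  | zero => rfl
  | succ k ih => rw [zpow_add_one, ih]; ext <;> simp [β] <;> push_cast <;> ring
  | pred k ih => rw [zpow_sub_one, ih]; ext <;> simp [β] <;> push_cast <;> ring

theorem gamma_zpow (n : ℤ) : (γ : Heis r) ^ n = ⟨0, 0, n⟩ := by
  induction n using Int.induction_on with
  | zero => rfl
  | succ k ih => rw [zpow_add_one, ih]; ext <;> simp [γ] <;> push_cast <;> ring
  | pred k ih => rw [zpow_sub_one, ih]; ext <;> simp [γ] <;> push_cast <;> ring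

theorem decomp (h : Heis r) : h = α ^ h.x * β ^ h.y * γ ^ (h.z - r * h.x * h.y) := by
  rw [alpha_zpow, beta_zpow, gamma_zpow]
  ext <;> simp <;> ring

theorem hom_eq_of_gen {G : Type*} [Group G] (f g : Heis r →* G)
    (hα : f α = g α) (hβ : f β = g β) (hγ : f γ = g γ) (h : Heis r) : f h = g h := by
  rw [decomp h]
  simp only [map_mul, map_zpow, hα, hβ, hγ]

/-- the automorphism for the `L²⁺` case -/
def Sp : Heis r →* Heis r where
  toFun h := ⟨-h.x, -h.y, h.x - h.y + h.z⟩
  map_one' := by ext <;> simp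
  map_mul' a b := by ext <;> simp <;> ring

/-- the automorphism for the `L²` case -/
def Sm : Heis r →* Heis r where
  toFun h := ⟨-h.x, -h.y, h.z⟩
  map_one' := by ext <;> simp
  map_mul' a b := by ext <;> simp <;> ring

@[simp] theorem Sp_apply (h : Heis r) : Sp h = ⟨-h.x, -h.y, h.x - h.y + h.z⟩ := rfl
@[simp] theorem Sm_apply (h : Heis r) : Sm h = ⟨-h.x, -h.y, h.z⟩ := rfl

theorem phi_apply (φ : Multiplicative ℤ →* MulAut (Heis r)) (S : Heis r →* Heis r)
    (h1 : ∀ h, φ (Multiplicative.ofAdd 1) h = S h) (h2 : ∀ h, S (S h) = h)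
    (t : ℤ) (h : Heis r) :
    φ (Multiplicative.ofAdd t) h = if Even t then h else S h := by
  have hofAdd : Multiplicative.ofAdd t = (Multiplicative.ofAdd (1 : ℤ)) ^ t := by
    apply Multiplicative.toAdd.injective
    simp
  rw [hofAdd, map_zpow]
  set σ := φ (Multiplicative.ofAdd (1 : ℤ)) with hσ
  have hσ2 : σ ^ (2 : ℤ) = 1 := by
    rw [zpow_two]
    refine MulEquiv.ext fun x => ?_
    rw [MulAut.mul_apply, MulAut.one_apply, h1, h1, h2]
  rcases Int.even_or_odd t with ⟨k, hk⟩ | ⟨k, hk⟩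
  · have : t = 2 * k := by omega
    rw [this, zpow_mul, hσ2, one_zpow, if_pos ⟨k, by omega⟩]
    rfl
  · have ht : t = 2 * k + 1 := by omega
    rw [ht, zpow_add_one, zpow_mul, hσ2, one_zpow, one_mul,
        if_neg (by simp [Int.even_add_one, Int.even_mul])]
    exact h1 h

end Heis


open SemidirectProduct

theorem caseM (r : ℕ) (hr : 0 < r)
    (φ : Multiplicative ℤ →* MulAut (Heis (r : ℤ)))
    (hφ : ∀ (t : ℤ) (h : Heis (r : ℤ)),
      φ (Multiplicative.ofAdd t) h = if Even t then h else Heis.Sm h) :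
    Nonempty (Abelianization (Heis (r : ℤ) ⋊[φ] Multiplicative ℤ) ≃*
      Multiplicative (ZMod 2 × ZMod 2 × ZMod r × ℤ)) := by
  haveI : NeZero r := ⟨hr.ne'⟩
  -- the forward homomorphism
  let F : (Heis (r : ℤ) ⋊[φ] Multiplicative ℤ) →* Multiplicative (ZMod 2 × ZMod 2 × ZMod r × ℤ) :=
  { toFun := fun g => Multiplicative.ofAdd
      ((g.left.x : ZMod 2), (g.left.y : ZMod 2), (g.left.z : ZMod r), g.right.toAdd)
    map_one' := by
      simp
    map_mul' := by
      intro a b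
      have key : φ a.right b.left =
          if Even a.right.toAdd then b.left else Heis.Sm b.left := by
        conv_lhs => rw [← ofAdd_toAdd a.right]
        exact hφ _ _
      simp only [mul_left, mul_right, key]
      rw [← ofAdd_add]
      refine congrArg Multiplicative.ofAdd ?_
      by_cases he : Even (Multiplicative.toAdd a.right)
      · simp only [if_pos he]
        refine Prod.ext ?_ (Prod.ext ?_ (Prod.ext ?_ ?_)) <;>
          simp <;> push_cast [ZMod.natCast_self] <;> ring
      · simp only [if_neg he]
        refine Prod.ext ?_ (Prod.ext ?_ (Prod.ext ?_ ?_)) <;>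
          simp <;> push_cast [ZMod.natCast_self] <;> (try ring) <;>
          (try exact CharTwo.neg_eq _) }
  let π : (Heis (r : ℤ) ⋊[φ] Multiplicative ℤ) →*
      Abelianization (Heis (r : ℤ) ⋊[φ] Multiplicative ℤ) := Abelianization.of
  -- conjugation by δ is trivial in the abelianization
  have hS : ∀ h : Heis (r : ℤ), π (inl (Heis.Sm h)) = π (inl h) := by
    intro h
    have h1 : (inl (φ (Multiplicative.ofAdd (1 : ℤ)) h) :
          Heis (r : ℤ) ⋊[φ] Multiplicative ℤ) =
        inr (Multiplicative.ofAdd (1 : ℤ)) * inl h *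
          (inr (Multiplicative.ofAdd (1 : ℤ)))⁻¹ := by
      rw [inl_aut]
      simp
    rw [hφ 1 h, if_neg (by decide)] at h1
    rw [h1, map_mul, map_mul, map_inv]
    exact mul_inv_cancel_comm _ _
  have hsqα : (π (inl Heis.α)) ^ 2 = 1 := by
    have h1 := hS Heis.α
    have h2 : Heis.Sm (Heis.α : Heis (r : ℤ)) = Heis.α⁻¹ := by
      ext <;> simp [Heis.α]
    rw [h2, map_inv, map_inv] at h1
    rw [pow_two]
    nth_rewrite 1 [← h1]
    exact inv_mul_cancel _
  have hsqβ : (π (inl Heis.β)) ^ 2 = 1 := by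
    have h1 := hS Heis.β
    have h2 : Heis.Sm (Heis.β : Heis (r : ℤ)) = Heis.β⁻¹ := by
      ext <;> simp [Heis.β]
    rw [h2, map_inv, map_inv] at h1
    rw [pow_two]
    nth_rewrite 1 [← h1]
    exact inv_mul_cancel _
  have hγr : (π (inl Heis.γ)) ^ (r : ℤ) = 1 := by
    have hcom : (Heis.γ : Heis (r : ℤ)) ^ (r : ℤ) =
        Heis.α * Heis.β * Heis.α⁻¹ * Heis.β⁻¹ := by
      rw [Heis.gamma_zpow]
      ext <;> simp [Heis.α, Heis.β]
    rw [← map_zpow, ← map_zpow, hcom, map_mul, map_mul, map_mul, map_inv, map_inv,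
      map_mul, map_mul, map_mul, map_inv, map_inv, mul_inv_cancel_comm, mul_inv_cancel]
  -- the inverse homomorphism
  let f1 : ZMod 2 →+ Additive (Abelianization (Heis (r : ℤ) ⋊[φ] Multiplicative ℤ)) :=
    ZMod.lift 2 ⟨zmultiplesHom _ (Additive.ofMul (π (inl Heis.α))), by
      have h2 := hsqα
      rw [pow_two] at h2
      rw [zmultiplesHom_apply, ← ofMul_zpow, zpow_natCast, pow_two, h2, ofMul_one]⟩
  let f2 : ZMod 2 →+ Additive (Abelianization (Heis (r : ℤ) ⋊[φ] Multiplicative ℤ)) :=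
    ZMod.lift 2 ⟨zmultiplesHom _ (Additive.ofMul (π (inl Heis.β))), by
      have h2 := hsqβ
      rw [pow_two] at h2
      rw [zmultiplesHom_apply, ← ofMul_zpow, zpow_natCast, pow_two, h2, ofMul_one]⟩
  let f3 : ZMod r →+ Additive (Abelianization (Heis (r : ℤ) ⋊[φ] Multiplicative ℤ)) :=
    ZMod.lift r ⟨zmultiplesHom _ (Additive.ofMul (π (inl Heis.γ))), by
      rw [zmultiplesHom_apply, ← ofMul_zpow, hγr, ofMul_one]⟩
  let f4 : ℤ →+ Additive (Abelianization (Heis (r : ℤ) ⋊[φ] Multiplicative ℤ)) :=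
    zmultiplesHom _ (Additive.ofMul (π (inr (Multiplicative.ofAdd (1 : ℤ)))))
  let Ψadd : (ZMod 2 × ZMod 2 × ZMod r × ℤ) →+
      Additive (Abelianization (Heis (r : ℤ) ⋊[φ] Multiplicative ℤ)) :=
  { toFun := fun v => f1 v.1 + f2 v.2.1 + f3 v.2.2.1 + f4 v.2.2.2
    map_zero' := by simp
    map_add' := by
      intro v w
      simp only [Prod.fst_add, Prod.snd_add, map_add]
      abel }
  let Ψ : Multiplicative (ZMod 2 × ZMod 2 × ZMod r × ℤ) →*
      Abelianization (Heis (r : ℤ) ⋊[φ] Multiplicative ℤ) :=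
    AddMonoidHom.toMultiplicativeLeft Ψadd
  -- value of Ψ on explicit tuples
  have hΨ : ∀ a b c d : ℤ, Ψ (Multiplicative.ofAdd
        (((a : ZMod 2), (b : ZMod 2), (c : ZMod r), d))) =
      π (inl Heis.α) ^ a * π (inl Heis.β) ^ b * π (inl Heis.γ) ^ c *
        π (inr (Multiplicative.ofAdd (1 : ℤ))) ^ d := by
    intro a b c d
    show (Ψadd ((a : ZMod 2), (b : ZMod 2), (c : ZMod r), d)).toMul = _
    simp only [Ψadd, AddMonoidHom.coe_mk, ZeroHom.coe_mk, f1, f2, f3, f4,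
      ZMod.lift_coe, zmultiplesHom_apply, toMul_add, toMul_zsmul, toMul_ofMul]
  -- values of F on generators
  have hFα : F (inl Heis.α) = Multiplicative.ofAdd ((1 : ZMod 2), 0, 0, 0) := by
    simp [F, Heis.α]
  have hFβ : F (inl Heis.β) = Multiplicative.ofAdd ((0 : ZMod 2), 1, 0, 0) := by
    simp [F, Heis.β]
  have hFγ : F (inl Heis.γ) = Multiplicative.ofAdd ((0 : ZMod 2), 0, 1, 0) := by
    simp [F, Heis.γ]
  have hFδ : F (inr (Multiplicative.ofAdd (1 : ℤ))) =
      Multiplicative.ofAdd ((0 : ZMod 2), 0, 0, 1) := by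
    simp [F]
  refine ⟨⟨⟨Abelianization.lift F, Ψ, ?_, ?_⟩, map_mul _⟩⟩
  · -- left inverse
    have key : Ψ.comp (Abelianization.lift F) = MonoidHom.id _ := by
      apply Abelianization.hom_ext
      apply SemidirectProduct.hom_ext
      · refine MonoidHom.ext fun h => Heis.hom_eq_of_gen _ _ ?_ ?_ ?_ h <;>
          simp only [MonoidHom.comp_apply, MonoidHom.id_apply, Abelianization.lift_apply_of]
        · rw [hFα]
          have := hΨ 1 0 0 0
          norm_num at this
          simpa using this
        · rw [hFβ]
          have := hΨ 0 1 0 0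
          norm_num at this
          simpa using this
        · rw [hFγ]
          have := hΨ 0 0 1 0
          norm_num at this
          simpa using this
      · refine MonoidHom.ext_mint ?_
        simp only [MonoidHom.comp_apply, MonoidHom.id_apply, Abelianization.lift_apply_of]
        rw [hFδ]
        have := hΨ 0 0 0 1
        norm_num at this
        simpa using this
    intro g
    exact DFunLike.congr_fun key g
  · -- right inverse
    intro v
    have hv : v = Multiplicative.ofAdd (v.toAdd.1, v.toAdd.2.1, v.toAdd.2.2.1, v.toAdd.2.2.2) :=
      rfl
    rw [hv]
    set a := v.toAdd.1
    set b := v.toAdd.2.1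
    set c := v.toAdd.2.2.1
    set d := v.toAdd.2.2.2
    have ha : ((a.val : ℤ) : ZMod 2) = a := by
      rw [Int.cast_natCast, ZMod.natCast_zmod_val]
    have hb : ((b.val : ℤ) : ZMod 2) = b := by
      rw [Int.cast_natCast, ZMod.natCast_zmod_val]
    have hc : ((c.val : ℤ) : ZMod r) = c := by
      rw [Int.cast_natCast, ZMod.natCast_zmod_val]
    rw [← ha, ← hb, ← hc, hΨ]
    rw [map_mul, map_mul, map_mul, map_zpow, map_zpow, map_zpow, map_zpow,
      Abelianization.lift_apply_of, Abelianization.lift_apply_of, Abelianization.lift_apply_of,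
      Abelianization.lift_apply_of, hFα, hFβ, hFγ, hFδ]
    apply Multiplicative.toAdd.injective
    simp only [toAdd_mul, toAdd_zpow, toAdd_ofAdd, Prod.smul_mk, Prod.mk_add_mk,
      smul_zero, zsmul_eq_mul, mul_one, mul_zero, zero_mul, smul_eq_mul, add_zero, zero_add, ha, hb, hc]

theorem caseP (r : ℕ) (hr : 0 < r)
    (φ : Multiplicative ℤ →* MulAut (Heis (r : ℤ)))
    (hφ : ∀ (t : ℤ) (h : Heis (r : ℤ)),
      φ (Multiplicative.ofAdd t) h = if Even t then h else Heis.Sp h) :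
    Nonempty (Abelianization (Heis (r : ℤ) ⋊[φ] Multiplicative ℤ) ≃*
      Multiplicative (ZMod 2 × ZMod (2 * r) × ℤ)) := by
  haveI : NeZero (2 * r) := ⟨by omega⟩
  have h0 : ((2 * r : ℕ) : ZMod (2 * r)) = 0 := ZMod.natCast_self _
  push_cast at h0
  -- the forward homomorphism
  let F : (Heis (r : ℤ) ⋊[φ] Multiplicative ℤ) →* Multiplicative (ZMod 2 × ZMod (2 * r) × ℤ) :=
  { toFun := fun g => Multiplicative.ofAdd
      ((g.left.y : ZMod 2),
        ((g.left.x - g.left.y + 2 * g.left.z : ℤ) : ZMod (2 * r)), g.right.toAdd)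
    map_one' := by
      simp
    map_mul' := by
      intro a b
      have key : φ a.right b.left =
          if Even a.right.toAdd then b.left else Heis.Sp b.left := by
        conv_lhs => rw [← ofAdd_toAdd a.right]
        exact hφ _ _
      simp only [mul_left, mul_right, key]
      rw [← ofAdd_add]
      refine congrArg Multiplicative.ofAdd ?_
      have h2 : (2 : ZMod 2) = 0 := by decide
      by_cases he : Even (Multiplicative.toAdd a.right)
      · simp only [if_pos he]
        refine Prod.ext ?_ (Prod.ext ?_ ?_)
        · simp only [Heis.mul_y, Prod.mk_add_mk]
          push_cast
          ring
        · simp only [Heis.mul_x, Heis.mul_y, Heis.mul_z, Prod.mk_add_mk]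
          push_cast
          linear_combination ((a.left.x : ZMod (2 * r)) * (b.left.y : ZMod (2 * r))) * h0
        · simp only [toAdd_mul, Prod.mk_add_mk]
      · simp only [if_neg he]
        refine Prod.ext ?_ (Prod.ext ?_ ?_)
        · simp only [Heis.mul_y, Heis.Sp_apply, Prod.mk_add_mk]
          push_cast
          linear_combination (-(b.left.y : ZMod 2)) * h2
        · simp only [Heis.mul_x, Heis.mul_y, Heis.mul_z, Heis.Sp_apply, Prod.mk_add_mk]
          push_cast
          linear_combination (-(a.left.x : ZMod (2 * r)) * (b.left.y : ZMod (2 * r))) * h0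
        · simp only [toAdd_mul, Prod.mk_add_mk] }
  let π : (Heis (r : ℤ) ⋊[φ] Multiplicative ℤ) →*
      Abelianization (Heis (r : ℤ) ⋊[φ] Multiplicative ℤ) := Abelianization.of
  have hS : ∀ h : Heis (r : ℤ), π (inl (Heis.Sp h)) = π (inl h) := by
    intro h
    have h1 : (inl (φ (Multiplicative.ofAdd (1 : ℤ)) h) :
          Heis (r : ℤ) ⋊[φ] Multiplicative ℤ) =
        inr (Multiplicative.ofAdd (1 : ℤ)) * inl h *
          (inr (Multiplicative.ofAdd (1 : ℤ)))⁻¹ := by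
      rw [inl_aut]
      simp
    rw [hφ 1 h, if_neg (by decide)] at h1
    rw [h1, map_mul, map_mul, map_inv]
    exact mul_inv_cancel_comm _ _
  -- relations in the abelianization
  have hγ2 : π (inl Heis.γ) = π (inl Heis.α) ^ 2 := by
    have E := hS Heis.α
    have h2 : Heis.Sp (Heis.α : Heis (r : ℤ)) = Heis.α⁻¹ * Heis.γ := by
      ext <;> simp [Heis.α, Heis.γ]
    rw [h2, map_mul, map_mul, map_inv, map_inv] at E
    calc π (inl Heis.γ) = π (inl Heis.α) * ((π (inl Heis.α))⁻¹ * π (inl Heis.γ)) := by group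
    _ = π (inl Heis.α) ^ 2 := by rw [E, pow_two]
  have hβ2 : (π (inl Heis.γ))⁻¹ = π (inl Heis.β) ^ 2 := by
    have E := hS Heis.β
    have h2 : Heis.Sp (Heis.β : Heis (r : ℤ)) = Heis.β⁻¹ * Heis.γ⁻¹ := by
      ext <;> simp [Heis.β, Heis.γ]
    rw [h2, map_mul, map_mul, map_inv, map_inv, map_inv, map_inv] at E
    calc (π (inl Heis.γ))⁻¹
        = π (inl Heis.β) * ((π (inl Heis.β))⁻¹ * (π (inl Heis.γ))⁻¹) := by group
    _ = π (inl Heis.β) ^ 2 := by rw [E, pow_two]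
  have hγr : (π (inl Heis.γ)) ^ (r : ℤ) = 1 := by
    have hcom : (Heis.γ : Heis (r : ℤ)) ^ (r : ℤ) =
        Heis.α * Heis.β * Heis.α⁻¹ * Heis.β⁻¹ := by
      rw [Heis.gamma_zpow]
      ext <;> simp [Heis.α, Heis.β]
    rw [← map_zpow, ← map_zpow, hcom, map_mul, map_mul, map_mul, map_inv, map_inv,
      map_mul, map_mul, map_mul, map_inv, map_inv, mul_inv_cancel_comm, mul_inv_cancel]
  have hsq1 : (π (inl (Heis.α * Heis.β))) ^ 2 = 1 := by
    rw [map_mul, map_mul, mul_pow, ← hβ2, ← hγ2, mul_inv_cancel]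
  have he2r : π (inl Heis.α) ^ ((2 * r : ℕ) : ℤ) = 1 := by
    have hc : ((2 * r : ℕ) : ℤ) = 2 * (r : ℤ) := by push_cast; ring
    rw [hc, zpow_mul, zpow_two, ← pow_two, ← hγ2, hγr]
  -- the inverse homomorphism
  let f1 : ZMod 2 →+ Additive (Abelianization (Heis (r : ℤ) ⋊[φ] Multiplicative ℤ)) :=
    ZMod.lift 2 ⟨zmultiplesHom _ (Additive.ofMul (π (inl (Heis.α * Heis.β)))), by
      have h2 := hsq1
      rw [pow_two] at h2
      rw [zmultiplesHom_apply, ← ofMul_zpow, zpow_natCast, pow_two, h2, ofMul_one]⟩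
  let f2 : ZMod (2 * r) →+ Additive (Abelianization (Heis (r : ℤ) ⋊[φ] Multiplicative ℤ)) :=
    ZMod.lift (2 * r) ⟨zmultiplesHom _ (Additive.ofMul (π (inl Heis.α))), by
      rw [zmultiplesHom_apply, ← ofMul_zpow, he2r, ofMul_one]⟩
  let f3 : ℤ →+ Additive (Abelianization (Heis (r : ℤ) ⋊[φ] Multiplicative ℤ)) :=
    zmultiplesHom _ (Additive.ofMul (π (inr (Multiplicative.ofAdd (1 : ℤ)))))
  let Ψadd : (ZMod 2 × ZMod (2 * r) × ℤ) →+
      Additive (Abelianization (Heis (r : ℤ) ⋊[φ] Multiplicative ℤ)) :=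
  { toFun := fun v => f1 v.1 + f2 v.2.1 + f3 v.2.2
    map_zero' := by simp
    map_add' := by
      intro v w
      simp only [Prod.fst_add, Prod.snd_add, map_add]
      abel }
  let Ψ : Multiplicative (ZMod 2 × ZMod (2 * r) × ℤ) →*
      Abelianization (Heis (r : ℤ) ⋊[φ] Multiplicative ℤ) :=
    AddMonoidHom.toMultiplicativeLeft Ψadd
  have hΨ : ∀ a b c : ℤ, Ψ (Multiplicative.ofAdd
        (((a : ZMod 2), (b : ZMod (2 * r)), c))) =
      π (inl (Heis.α * Heis.β)) ^ a * π (inl Heis.α) ^ b *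
        π (inr (Multiplicative.ofAdd (1 : ℤ))) ^ c := by
    intro a b c
    show (Ψadd ((a : ZMod 2), (b : ZMod (2 * r)), c)).toMul = _
    simp only [Ψadd, AddMonoidHom.coe_mk, ZeroHom.coe_mk, f1, f2, f3,
      ZMod.lift_coe, zmultiplesHom_apply, toMul_add, toMul_zsmul, toMul_ofMul]
  -- values of F on generators
  have hFα : F (inl Heis.α) = Multiplicative.ofAdd ((0 : ZMod 2), 1, 0) := by
    simp [F, Heis.α]
  have hFβ : F (inl Heis.β) = Multiplicative.ofAdd ((1 : ZMod 2), -1, 0) := by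
    simp [F, Heis.β]
  have hFγ : F (inl Heis.γ) = Multiplicative.ofAdd ((0 : ZMod 2), 2, 0) := by
    simp [F, Heis.γ]
  have hFαβ : F (inl (Heis.α * Heis.β)) = Multiplicative.ofAdd ((1 : ZMod 2), 0, 0) := by
    simp [F, Heis.α, Heis.β]
    push_cast
    linear_combination h0
  have hFδ : F (inr (Multiplicative.ofAdd (1 : ℤ))) =
      Multiplicative.ofAdd ((0 : ZMod 2), 0, 1) := by
    simp [F]
  refine ⟨⟨⟨Abelianization.lift F, Ψ, ?_, ?_⟩, map_mul _⟩⟩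
  · -- left inverse
    have key : Ψ.comp (Abelianization.lift F) = MonoidHom.id _ := by
      apply Abelianization.hom_ext
      apply SemidirectProduct.hom_ext
      · refine MonoidHom.ext fun h => Heis.hom_eq_of_gen _ _ ?_ ?_ ?_ h <;>
          simp only [MonoidHom.comp_apply, MonoidHom.id_apply, Abelianization.lift_apply_of]
        · rw [hFα]
          have := hΨ 0 1 0
          norm_num at this
          simpa using this
        · rw [hFβ]
          have := hΨ 1 (-1) 0
          norm_num at this
          rw [this]
        · rw [hFγ]
          have := hΨ 0 2 0
          norm_num at this
          rw [this]
          exact hγ2.symm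
      · refine MonoidHom.ext_mint ?_
        simp only [MonoidHom.comp_apply, MonoidHom.id_apply, Abelianization.lift_apply_of]
        rw [hFδ]
        have := hΨ 0 0 1
        norm_num at this
        simpa using this
    intro g
    exact DFunLike.congr_fun key g
  · -- right inverse
    intro v
    have hv : v = Multiplicative.ofAdd (v.toAdd.1, v.toAdd.2.1, v.toAdd.2.2) := rfl
    rw [hv]
    set a := v.toAdd.1
    set b := v.toAdd.2.1
    set c := v.toAdd.2.2
    have ha : ((a.val : ℤ) : ZMod 2) = a := by
      rw [Int.cast_natCast, ZMod.natCast_zmod_val]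
    have hb : ((b.val : ℤ) : ZMod (2 * r)) = b := by
      rw [Int.cast_natCast, ZMod.natCast_zmod_val]
    rw [← ha, ← hb, hΨ]
    rw [map_mul, map_mul, map_zpow, map_zpow, map_zpow,
      Abelianization.lift_apply_of, Abelianization.lift_apply_of, Abelianization.lift_apply_of,
      hFαβ, hFα, hFδ]
    apply Multiplicative.toAdd.injective
    simp only [toAdd_mul, toAdd_zpow, toAdd_ofAdd, Prod.smul_mk, Prod.mk_add_mk,
      smul_zero, zsmul_eq_mul, mul_one, mul_zero, zero_mul, smul_eq_mul, add_zero,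
      zero_add, ha, hb]

/-- For even `r`, the abelianization of the discrete oscillator group of type `L²⁺_r`
(with `S(α) = α⁻¹γ`, `S(β) = β⁻¹γ⁻¹`) is `ℤ₂ × ℤ_{2r} × ℤ`, while that of type `L²_r`
(with `S(α) = α⁻¹`, `S(β) = β⁻¹`) is `ℤ₂ × ℤ₂ × ℤ_r × ℤ`; in particular, these two
abelianizations are not isomorphic. -/
theorem abelianizations_of_type_two_lattices
    (r : ℕ) (hr : 0 < r) (hre : Even r)
    (φp φm : Multiplicative ℤ →* MulAut (Heis (r : ℤ)))
    (hpα : φp (Multiplicative.ofAdd 1) Heis.α = Heis.α⁻¹ * Heis.γ)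
    (hpβ : φp (Multiplicative.ofAdd 1) Heis.β = Heis.β⁻¹ * Heis.γ⁻¹)
    (hpγ : φp (Multiplicative.ofAdd 1) Heis.γ = Heis.γ)
    (hmα : φm (Multiplicative.ofAdd 1) Heis.α = Heis.α⁻¹)
    (hmβ : φm (Multiplicative.ofAdd 1) Heis.β = Heis.β⁻¹)
    (hmγ : φm (Multiplicative.ofAdd 1) Heis.γ = Heis.γ) :
    Nonempty (Abelianization (Heis (r : ℤ) ⋊[φp] Multiplicative ℤ) ≃*
      Multiplicative (ZMod 2 × ZMod (2 * r) × ℤ)) ∧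
    Nonempty (Abelianization (Heis (r : ℤ) ⋊[φm] Multiplicative ℤ) ≃*
      Multiplicative (ZMod 2 × ZMod 2 × ZMod r × ℤ)) ∧
    IsEmpty (Abelianization (Heis (r : ℤ) ⋊[φp] Multiplicative ℤ) ≃*
      Abelianization (Heis (r : ℤ) ⋊[φm] Multiplicative ℤ)) := by
  haveI : NeZero r := ⟨hr.ne'⟩
  haveI : NeZero (2 * r) := ⟨by omega⟩
  -- the one-step automorphisms
  have h1p : ∀ h : Heis (r : ℤ), φp (Multiplicative.ofAdd 1) h = Heis.Sp h := by
    intro h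
    refine Heis.hom_eq_of_gen
      ((φp (Multiplicative.ofAdd 1) : Heis (r : ℤ) ≃* Heis (r : ℤ)) :
        Heis (r : ℤ) →* Heis (r : ℤ)) Heis.Sp ?_ ?_ ?_ h
    · show φp (Multiplicative.ofAdd 1) Heis.α = Heis.Sp Heis.α
      rw [hpα]; ext <;> simp [Heis.α, Heis.γ]
    · show φp (Multiplicative.ofAdd 1) Heis.β = Heis.Sp Heis.β
      rw [hpβ]; ext <;> simp [Heis.β, Heis.γ]
    · show φp (Multiplicative.ofAdd 1) Heis.γ = Heis.Sp Heis.γ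
      rw [hpγ]; ext <;> simp [Heis.γ]
  have h1m : ∀ h : Heis (r : ℤ), φm (Multiplicative.ofAdd 1) h = Heis.Sm h := by
    intro h
    refine Heis.hom_eq_of_gen
      ((φm (Multiplicative.ofAdd 1) : Heis (r : ℤ) ≃* Heis (r : ℤ)) :
        Heis (r : ℤ) →* Heis (r : ℤ)) Heis.Sm ?_ ?_ ?_ h
    · show φm (Multiplicative.ofAdd 1) Heis.α = Heis.Sm Heis.α
      rw [hmα]; ext <;> simp [Heis.α]
    · show φm (Multiplicative.ofAdd 1) Heis.β = Heis.Sm Heis.β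
      rw [hmβ]; ext <;> simp [Heis.β]
    · show φm (Multiplicative.ofAdd 1) Heis.γ = Heis.Sm Heis.γ
      rw [hmγ]; ext <;> simp [Heis.γ]
  have hφp : ∀ (t : ℤ) (h : Heis (r : ℤ)),
      φp (Multiplicative.ofAdd t) h = if Even t then h else Heis.Sp h :=
    Heis.phi_apply φp Heis.Sp h1p (fun h => by ext <;> simp <;> ring)
  have hφm : ∀ (t : ℤ) (h : Heis (r : ℤ)),
      φm (Multiplicative.ofAdd t) h = if Even t then h else Heis.Sm h :=
    Heis.phi_apply φm Heis.Sm h1m (fun h => by ext <;> simp)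
  obtain ⟨fp⟩ := caseP r hr φp hφp
  obtain ⟨fm⟩ := caseM r hr φm hφm
  refine ⟨⟨fp⟩, ⟨fm⟩, ⟨fun e => ?_⟩⟩
  -- compose to get an additive equivalence of the explicit groups
  let E : (ZMod 2 × ZMod (2 * r) × ℤ) ≃+ (ZMod 2 × ZMod 2 × ZMod r × ℤ) :=
    AddEquiv.toMultiplicative.symm ((fp.symm.trans e).trans fm)
  set y : ZMod 2 × ZMod (2 * r) × ℤ := (0, 1, 0) with hy
  have h2ry : (2 * r) • y = 0 := by
    refine Prod.ext ?_ (Prod.ext ?_ ?_) <;>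
      simp [hy, nsmul_eq_mul, ZMod.natCast_self]
  have hz : (E y).2.2.2 = 0 := by
    have h4 : (2 * r) • (E y) = 0 := by rw [← map_nsmul, h2ry, map_zero]
    have h5 : ((2 * r : ℕ) : ℤ) * (E y).2.2.2 = 0 := by
      have := congrArg (fun p => p.2.2.2) h4
      simpa [nsmul_eq_mul] using this
    rcases mul_eq_zero.mp h5 with h | h
    · exfalso
      have : (2 * r : ℕ) = 0 := by exact_mod_cast h
      omega
    · exact h
  have hr2 : ((r : ℕ) : ZMod 2) = 0 :=
    (ZMod.natCast_eq_zero_iff _ _).mpr hre.two_dvd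
  have hrx : r • (E y) = 0 := by
    refine Prod.ext ?_ (Prod.ext ?_ (Prod.ext ?_ ?_)) <;>
      simp [nsmul_eq_mul, hr2, ZMod.natCast_self, hz]
  have h7 : r • y = 0 := E.injective (by rw [map_nsmul, hrx, map_zero])
  have h8 : ((r : ℕ) : ZMod (2 * r)) = 0 := by
    have := congrArg (fun p => p.2.1) h7
    simpa [hy, nsmul_eq_mul] using this
  rw [ZMod.natCast_eq_zero_iff] at h8
  have := Nat.le_of_dvd hr h8
  omega
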